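/- Let L be an infinite c.e. subset of ℕ and let M be a learner that TxtFext*_*-identifies every text for L. Then there exists a finite sequence σ with content(σ) ⊆ L such that for all finite sequences τ₁, τ₂ extending σ with content(τ₁) ⊆ L and content(τ₂) ⊆ L, we have W_{M(τ₁)} = W_{M(τ₂)}. -/

import Mathlib

open Filter

/-- The `a`-th computably enumerable set: the domain of the `a`-th partial
computable function, under the standard numbering via `Nat.Partrec.Code`. -/
def W (a : ℕ) : Set ℕ := {x | ((Denumerable.ofNat Nat.Partrec.Code a).eval x).Dom}

/-- The stage-`s` approximation `W_{a,s}` of the `a`-th c.e. set. -/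
def Wstage (a s : ℕ) : Set ℕ :=
  {x | (Nat.Partrec.Code.evaln s (Denumerable.ofNat Nat.Partrec.Code a) x).isSome}

/-- `A` is computably enumerable. -/
def IsCE (A : Set ℕ) : Prop := ∃ a : ℕ, A = W a

/-- The content (set of values) of a finite sequence. -/
def content (σ : List ℕ) : Set ℕ := {x | x ∈ σ}

/-- The initial segment `f↾n` of a text `f`. -/
def seg (f : ℕ → ℕ) (n : ℕ) : List ℕ := (List.range n).map f

/-- `A =* B` : the symmetric difference of `A` and `B` is finite. -/
def eqStar (A B : Set ℕ) : Prop := (symmDiff A B).Finite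

/-- `A =^i B` : the symmetric difference of `A` and `B` has cardinality at most `i`. -/
def eqWithin (i : ℕ) (A B : Set ℕ) : Prop :=
  (symmDiff A B).Finite ∧ (symmDiff A B).ncard ≤ i

/-- Accuracy parameter: `some i` means `=^i`, `none` means `=*`. -/
def Accurate : Option ℕ → Set ℕ → Set ℕ → Prop
  | none => eqStar
  | some i => eqWithin i

/-- Cardinality bound parameter: `some j` bounds `card S ≤ j`, `none` ( `*` ) is no bound. -/
def CardOK : Option ℕ → Finset ℕ → Prop
  | none => fun _ => True
  | some j => fun S => S.card ≤ j

/-- `M` TxtFex^i_j-identifies the text `f`. -/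
def FexIdentifies (i j : Option ℕ) (M : List ℕ → ℕ) (f : ℕ → ℕ) : Prop :=
  ∃ S : Finset ℕ, CardOK j S ∧ (∀ᶠ n in atTop, M (seg f n) ∈ S) ∧
    ∀ a ∈ S, Accurate i (W a) (Set.range f)

/-- `M` TxtFext^i_j-identifies the text `f`. -/
def FextIdentifies (i j : Option ℕ) (M : List ℕ → ℕ) (f : ℕ → ℕ) : Prop :=
  ∃ S : Finset ℕ, CardOK j S ∧ (∀ᶠ n in atTop, M (seg f n) ∈ S) ∧
    (∀ a ∈ S, Accurate i (W a) (Set.range f)) ∧ (∀ a ∈ S, ∀ b ∈ S, W a = W b)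

/-- `M` TxtFex^i_j-learns the set `A` : it identifies every text for `A`. -/
def FexLearnsSet (i j : Option ℕ) (M : List ℕ → ℕ) (A : Set ℕ) : Prop :=
  ∀ f : ℕ → ℕ, Set.range f = A → FexIdentifies i j M f

/-- `M` TxtFext^i_j-learns the set `A`. -/
def FextLearnsSet (i j : Option ℕ) (M : List ℕ → ℕ) (A : Set ℕ) : Prop :=
  ∀ f : ℕ → ℕ, Set.range f = A → FextIdentifies i j M f

/-- `M` TxtFex^i_j-learns the family `𝓕`. -/
def FexLearnsFamily (i j : Option ℕ) (M : List ℕ → ℕ) (𝓕 : Set (Set ℕ)) : Prop :=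
  ∀ A ∈ 𝓕, FexLearnsSet i j M A

/-- `M` TxtFext^i_j-learns the family `𝓕`. -/
def FextLearnsFamily (i j : Option ℕ) (M : List ℕ → ℕ) (𝓕 : Set (Set ℕ)) : Prop :=
  ∀ A ∈ 𝓕, FextLearnsSet i j M A

/-- `𝓕` is TxtFex^i_j-learnable: some computable learner learns it. -/
def FexLearnable (i j : Option ℕ) (𝓕 : Set (Set ℕ)) : Prop :=
  ∃ M : List ℕ → ℕ, Computable M ∧ FexLearnsFamily i j M 𝓕

/-- `𝓕` is TxtFext^i_j-learnable. -/
def FextLearnable (i j : Option ℕ) (𝓕 : Set (Set ℕ)) : Prop :=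
  ∃ M : List ℕ → ℕ, Computable M ∧ FextLearnsFamily i j M 𝓕

/-- A family of nonempty c.e. sets. -/
def NiceFamily (𝓕 : Set (Set ℕ)) : Prop := ∀ A ∈ 𝓕, A.Nonempty ∧ IsCE A

/-!
Blum–Blum locking-sequence argument. If no finite sequence `σ` locks the conjectured set, then
every admissible sequence has an extension with content in `L` on which `W ∘ M` changes. Alternating
"append the next element of `L`" with "move to such an extension" yields a chain of sequences whose
limit is a text for `L` on which `W ∘ M` changes infinitely often, whereas TxtFext identification
makes `W ∘ M` eventually constant along every text for `L`.
-/

theorem FextIdentifies.eventuallyConst_W {i j : Option ℕ} {M : List ℕ → ℕ} {f : ℕ → ℕ}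
    (hf : FextIdentifies i j M f) : EventuallyConst (fun n => W (M (seg f n))) atTop := by
  obtain ⟨S, -, hev, -, hW⟩ := hf
  obtain ⟨N, hN⟩ := eventually_atTop.mp hev
  exact eventuallyConst_atTop.mpr ⟨N, fun n hn => hW _ (hN n hn) _ (hN N le_rfl)⟩

theorem content_append_singleton_subset {L : Set ℕ} {σ : List ℕ} {x : ℕ} (hσ : content σ ⊆ L)
    (hx : x ∈ L) : content (σ ++ [x]) ⊆ L := by
  intro y hy
  rcases List.mem_append.mp hy with hy | hy
  · exact hσ hy
  · exact List.mem_singleton.mp hy ▸ hx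

section LimitText

/-- The union of a chain of lists under `<+:`. When the lengths grow strictly, `s (m + 1)` has
more than `m` entries, so the default `0` is never read. -/
def limitText (s : ℕ → List ℕ) (m : ℕ) : ℕ := (s (m + 1)).getD m 0

variable {s : ℕ → List ℕ} (hstep : ∀ n, s n <+: s (n + 1))
  (hlen : ∀ n, (s n).length < (s (n + 1)).length)
include hstep hlen

theorem limitText_eq_getElem {i k : ℕ} (hi : i < (s k).length) :
    limitText s i = (s k)[i] := by
  have hprefix : ∀ {a b : ℕ}, a ≤ b → s a <+: s b :=
    fun hab => Nat.rel_of_forall_rel_succ_of_le _ hstep hab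
  have hi' : i < (s (i + 1)).length :=
    (strictMono_nat_of_lt_succ hlen).id_le (i + 1)
  rw [limitText, List.getD_eq_getElem _ _ hi']
  rcases le_total (i + 1) k with hik | hki
  · exact (hprefix hik).getElem hi'
  · exact ((hprefix hki).getElem hi).symm

theorem seg_limitText_length {t : List ℕ} {k : ℕ} (htk : t <+: s k) :
    seg (limitText s) t.length = t := by
  refine List.ext_getElem (by simp [seg]) fun i hi hit => ?_
  simp only [seg, List.getElem_map, List.getElem_range]
  rw [limitText_eq_getElem hstep hlen (lt_of_lt_of_le hit htk.length_le), htk.getElem hit]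

theorem range_limitText : Set.range (limitText s) = ⋃ n, content (s n) := by
  ext x
  simp only [Set.mem_range, Set.mem_iUnion, content, Set.mem_ofPred_eq]
  constructor
  · rintro ⟨m, rfl⟩
    have hm : m < (s (m + 1)).length := (strictMono_nat_of_lt_succ hlen).id_le (m + 1)
    exact ⟨m + 1, limitText_eq_getElem hstep hlen hm ▸ List.getElem_mem hm⟩
  · rintro ⟨n, hx⟩
    obtain ⟨i, hi, rfl⟩ := List.mem_iff_getElem.mp hx
    exact ⟨i, limitText_eq_getElem hstep hlen hi⟩

end LimitText

section Locking

variable {β : Type*} {L : Set ℕ} {h : List ℕ → β}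

theorem exists_chain_of_forall_exists_ne
    (hesc : ∀ σ, content σ ⊆ L → ∃ τ, σ <+: τ ∧ content τ ⊆ L ∧ h τ ≠ h σ)
    (g : ℕ → ℕ) (hg : ∀ n, g n ∈ L) :
    ∃ s : ℕ → List ℕ, ∀ n, content (s n) ⊆ L ∧ s n ++ [g n] <+: s (n + 1) ∧
      h (s (n + 1)) ≠ h (s n ++ [g n]) := by
  choose F hF using hesc
  let next (σ : {σ : List ℕ // content σ ⊆ L}) (n : ℕ) : {σ : List ℕ // content σ ⊆ L} :=
    ⟨F _ (content_append_singleton_subset σ.2 (hg n)),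
      (hF _ (content_append_singleton_subset σ.2 (hg n))).2.1⟩
  let t (n : ℕ) : {σ : List ℕ // content σ ⊆ L} :=
    Nat.rec ⟨[], fun _ hx => absurd hx List.not_mem_nil⟩ (fun n σ => next σ n) n
  refine ⟨fun n => (t n).1, fun n => ⟨(t n).2, ?_, ?_⟩⟩
  · exact (hF _ (content_append_singleton_subset (t n).2 (hg n))).1
  · exact (hF _ (content_append_singleton_subset (t n).2 (hg n))).2.2

theorem exists_text_not_eventuallyConst (hL : L.Nonempty)
    (hesc : ∀ σ, content σ ⊆ L → ∃ τ, σ <+: τ ∧ content τ ⊆ L ∧ h τ ≠ h σ) :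
    ∃ f : ℕ → ℕ, Set.range f = L ∧ ¬ EventuallyConst (fun n => h (seg f n)) atTop := by
  obtain ⟨g, rfl⟩ := Set.Countable.exists_eq_range (Set.to_countable L) hL
  obtain ⟨s, hs⟩ :=
    exists_chain_of_forall_exists_ne hesc g (fun n => Set.mem_range_self n)
  have hext : ∀ n, s n ++ [g n] <+: s (n + 1) := fun n => (hs n).2.1
  have hstep : ∀ n, s n <+: s (n + 1) := fun n => (List.prefix_append _ _).trans (hext n)
  have hlen : ∀ n, (s n).length < (s (n + 1)).length := fun n => by
    simpa using (hext n).length_le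
  refine ⟨limitText s, ?_, fun hconst => ?_⟩
  · rw [range_limitText hstep hlen]
    refine subset_antisymm (Set.iUnion_subset fun n => (hs n).1) ?_
    rintro _ ⟨n, rfl⟩
    exact Set.mem_iUnion.mpr
      ⟨n + 1, (hext n).subset (List.mem_append_right _ (List.mem_singleton_self _))⟩
  · obtain ⟨N, hN⟩ := eventuallyConst_atTop.mp hconst
    have hN_le : N ≤ (s N).length := (strictMono_nat_of_lt_succ hlen).id_le N
    have happend := hN (s N ++ [g N]).length (by simp only [List.length_append]; omega)
    have hnext := hN (s (N + 1)).length (hN_le.trans (hlen N).le)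
    rw [seg_limitText_length hstep hlen (hext N)] at happend
    rw [seg_limitText_length hstep hlen (List.prefix_refl (s (N + 1)))] at hnext
    exact (hs N).2.2 (hnext.trans happend.symm)

theorem exists_locking_sequence (hL : L.Nonempty)
    (hconst : ∀ f : ℕ → ℕ, Set.range f = L → EventuallyConst (fun n => h (seg f n)) atTop) :
    ∃ σ : List ℕ, content σ ⊆ L ∧ ∀ τ, σ <+: τ → content τ ⊆ L → h τ = h σ := by
  by_contra hlock
  push Not at hlock
  obtain ⟨f, hf, hnconst⟩ := exists_text_not_eventuallyConst hL hlock
  exact hnconst (hconst f hf)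

end Locking

theorem exists_stabilizing_sequence_general (L : Set ℕ) (hLinf : L.Infinite)
    (M : List ℕ → ℕ)
    (hlearn : ∀ f : ℕ → ℕ, Set.range f = L → FextIdentifies none none M f) :
    ∃ σ : List ℕ, content σ ⊆ L ∧
      ∀ τ₁ τ₂ : List ℕ, σ <+: τ₁ → σ <+: τ₂ →
        content τ₁ ⊆ L → content τ₂ ⊆ L → W (M τ₁) = W (M τ₂) := by
  obtain ⟨σ, hσL, hσ⟩ := exists_locking_sequence (h := fun τ => W (M τ)) hLinf.nonempty
    fun f hf => (hlearn f hf).eventuallyConst_W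
  exact ⟨σ, hσL, fun τ₁ τ₂ h₁ h₂ hc₁ hc₂ => (hσ τ₁ h₁ hc₁).trans (hσ τ₂ h₂ hc₂).symm⟩

/-- If `M` TxtFext*_*-identifies every text for an infinite c.e. set `L`,
then there is a finite sequence `σ` with content in `L` on all of whose extensions
(with content in `L`) `M` outputs hypotheses coding one and the same set. -/
theorem exists_stabilizing_sequence (L : Set ℕ) (hLce : IsCE L) (hLinf : L.Infinite)
    (M : List ℕ → ℕ) (hM : Computable M)
    (hlearn : ∀ f : ℕ → ℕ, Set.range f = L → FextIdentifies none none M f) :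
    ∃ σ : List ℕ, content σ ⊆ L ∧
      ∀ τ₁ τ₂ : List ℕ, σ <+: τ₁ → σ <+: τ₂ →
        content τ₁ ⊆ L → content τ₂ ⊆ L → W (M τ₁) = W (M τ₂) :=
  exists_stabilizing_sequence_general L hLinf M hlearn
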